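/- Let G be a finitely generated free group and H a finitely generated nontrivial almost normal subgroup of G. Then H has finite index in G. -/

import Mathlib

/-- Two subgroups are commensurable if their intersection has finite index in both. -/
def CommensurableSubgroups {G : Type*} [Group G] (H K : Subgroup G) : Prop :=
  (H ⊓ K).relIndex H ≠ 0 ∧ (H ⊓ K).relIndex K ≠ 0

/-- `H` is almost normal in `G` if `H` is commensurable to each of its conjugates. -/
def AlmostNormal {G : Type*} [Group G] (H : Subgroup G) : Prop :=
  ∀ g : G, CommensurableSubgroups H (Subgroup.map (MulAut.conj g).toMonoidHom H)

/-!
A finitely generated subgroup `H` of a free group is quasiconvex: every prefix of the reduced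
word of an element of `H` lies within some bounded distance `R` of `H`. Conjugate a nontrivial
element of `H` to a cyclically reduced `c`. Any `w` can be extended by one letter to some `v` for
which `v c v⁻¹` is reduced as written; almost normality puts some `v cⁿ v⁻¹` with `n ≠ 0` into `H`,
and `v` is a prefix of its reduced word, so `w` lies within `R + 1` of `H`. Finitely many elements
of norm at most `R + 1` thus represent all cosets. This needs two generators; in rank at most one
the group is cyclic and every nontrivial subgroup has finite index.
-/

open List Pointwise

theorem Subgroup.finiteIndex_of_mul_eq_univ {G : Type*} [Group G] {H : Subgroup G} {T : Set G}
    (hT : T.Finite) (hHT : (H : Set G) * T = Set.univ) : H.FiniteIndex := by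
  refine finiteIndex_of_leftCoset_cover_const (s := hT.toFinset) (g := fun t ↦ t⁻¹) ?_
  refine Set.eq_univ_of_forall fun g ↦ ?_
  obtain ⟨h, hh, t, ht, hg⟩ := Set.mem_mul.mp (hHT ▸ Set.mem_univ g⁻¹)
  simp only [Set.mem_iUnion, Set.Finite.mem_toFinset, mem_leftCoset_iff, inv_inv]
  refine ⟨t, ht, ?_⟩
  rw [eq_inv_mul_of_mul_eq hg, inv_mul_cancel_right]
  exact inv_mem hh

theorem IsCyclic.finiteIndex_of_ne_bot {G : Type*} [Group G] [IsCyclic G] {H : Subgroup G}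
    (hH : H ≠ ⊥) : H.FiniteIndex := by
  obtain ⟨g, hg⟩ := IsCyclic.exists_generator (α := G)
  obtain ⟨h, hh, h1⟩ := H.bot_or_exists_ne_one.resolve_left hH
  obtain ⟨m, rfl⟩ := Subgroup.mem_zpowers_iff.mp (hg h)
  have hm : m ≠ 0 := by rintro rfl; exact h1 (zpow_zero g)
  refine Subgroup.finiteIndex_of_mul_eq_univ ((Set.finite_Ico 0 (m.natAbs : ℤ)).image (g ^ ·)) ?_
  refine Set.eq_univ_of_forall fun x ↦ ?_
  obtain ⟨k, rfl⟩ := Subgroup.mem_zpowers_iff.mp (hg x)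
  refine Set.mem_mul.mpr ⟨(g ^ m) ^ (k / m), zpow_mem hh _, g ^ (k % m),
    ⟨k % m, ⟨Int.emod_nonneg _ hm, Int.emod_lt _ hm⟩, rfl⟩, ?_⟩
  rw [← zpow_mul, ← zpow_add, Int.mul_ediv_add_emod]

theorem AlmostNormal.exists_conj_pow_mem {G : Type*} [Group G] {H : Subgroup G}
    (han : AlmostNormal H) {h : G} (hh : h ∈ H) (g : G) : ∃ n ≠ 0, (g * h * g⁻¹) ^ n ∈ H := by
  have hconj : g * h * g⁻¹ ∈ Subgroup.map (MulAut.conj g).toMonoidHom H := ⟨h, hh, rfl⟩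
  obtain ⟨n, hn, -, hmem⟩ := Subgroup.exists_pow_mem_of_relIndex_ne_zero (han g).2 hconj
  exact ⟨n, hn.ne', hmem.1.1⟩

theorem exists_notMem_of_card_le_three {α : Type*} [Nontrivial α] {s : Finset (α × Bool)}
    (hs : s.card ≤ 3) : ∃ y, y ∉ s := by
  classical
  obtain ⟨a, b, hab⟩ := exists_pair_ne α
  set t : Finset (α × Bool) := {(a, true), (a, false), (b, true), (b, false)}
  have ht : t.card = 4 := by simp [t, hab]
  obtain ⟨y, -, hy⟩ := Finset.exists_mem_notMem_of_card_lt_card (s := s) (t := t) (by omega)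
  exact ⟨y, hy⟩

namespace FreeGroup

variable {α : Type*} {L₁ L₂ p : List (α × Bool)}

theorem isReduced_append_iff : IsReduced (L₁ ++ L₂) ↔ IsReduced L₁ ∧ IsReduced L₂ ∧
    ∀ a ∈ L₁.getLast?, ∀ b ∈ L₂.head?, a.1 = b.1 → a.2 = b.2 :=
  isChain_append

theorem fst_eq_imp_snd_eq_iff {a b : α × Bool} : (a.1 = b.1 → a.2 = b.2) ↔ b ≠ (a.1, !a.2) := by
  rcases a with ⟨a₁, _ | _⟩ <;> rcases b with ⟨b₁, _ | _⟩ <;> simp [eq_comm]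

theorem Red.Step.exists_prefix_mk_eq (h : Red.Step L₁ L₂) (hp : p <+: L₂) :
    ∃ q, q <+: L₁ ∧ mk q = mk p := by
  cases h with
  | @not A B x b =>
    rcases prefix_or_prefix_of_prefix hp (prefix_append A B) with hpA | ⟨q, rfl⟩
    · exact ⟨p, hpA.trans (prefix_append _ _), rfl⟩
    · exact ⟨A ++ (x, b) :: (x, !b) :: q, by simpa using hp, Quot.sound Red.Step.not⟩

theorem Red.exists_prefix_mk_eq (h : Red L₁ L₂) (hp : p <+: L₂) :
    ∃ q, q <+: L₁ ∧ mk q = mk p := by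
  induction h generalizing p with
  | refl => exact ⟨p, hp, rfl⟩
  | tail _ hstep ih =>
    obtain ⟨q, hq, hqp⟩ := hstep.exists_prefix_mk_eq hp
    obtain ⟨r, hr, hrq⟩ := ih hq
    exact ⟨r, hr, hrq.trans hqp⟩

variable [DecidableEq α]

theorem exists_prefix_of_prefix_toWord_mul {x y : FreeGroup α} (hp : p <+: (x * y).toWord) :
    (∃ q, q <+: x.toWord ∧ mk q = mk p) ∨ ∃ q, q <+: y.toWord ∧ x * mk q = mk p := by
  rw [toWord_mul] at hp
  obtain ⟨q, hq, hqp⟩ := reduce.red.exists_prefix_mk_eq hp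
  rcases prefix_or_prefix_of_prefix hq (prefix_append x.toWord y.toWord) with hqx | ⟨r, rfl⟩
  · exact Or.inl ⟨q, hqx, hqp⟩
  · refine Or.inr ⟨r, (prefix_append_right_inj _).mp hq, ?_⟩
    rw [← hqp, ← mul_mk, mk_toWord]

theorem norm_mk_le_of_prefix {x : FreeGroup α} (hp : p <+: x.toWord) : (mk p).norm ≤ x.norm :=
  norm_mk_le.trans hp.length_le

/-- The prefixes of `h.toWord` are the vertices of the geodesic from `1` to `h` in the Cayley tree. -/
def IsQuasiconvex (H : Subgroup (FreeGroup α)) (R : ℕ) : Prop :=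
  ∀ h ∈ H, ∀ p, p <+: h.toWord → ∃ h' ∈ H, (h'⁻¹ * mk p).norm ≤ R

theorem isQuasiconvex_closure {S : Set (FreeGroup α)} {R : ℕ} (hR : ∀ s ∈ S, s.norm ≤ R) :
    IsQuasiconvex (Subgroup.closure S) R := by
  have short {x : FreeGroup α} (hx : x.norm ≤ R) (p) (hp : p <+: x.toWord) :
      ∃ h' ∈ Subgroup.closure S, (h'⁻¹ * mk p).norm ≤ R :=
    ⟨1, one_mem _, by simpa using (norm_mk_le_of_prefix hp).trans hx⟩
  intro h hh
  induction hh using Subgroup.closure_induction'' with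
  | mem s hs => exact short (hR s hs)
  | inv_mem s hs => exact short (by rw [norm_inv_eq]; exact hR s hs)
  | one => exact short (by simp)
  | mul x y hx _ ihx ihy =>
    intro p hp
    rcases exists_prefix_of_prefix_toWord_mul hp with ⟨q, hq, hqp⟩ | ⟨q, hq, hqp⟩
    · exact hqp ▸ ihx q hq
    · obtain ⟨h', hh', hnorm⟩ := ihy q hq
      refine ⟨x * h', mul_mem hx hh', ?_⟩
      rwa [← hqp, mul_inv_rev, mul_assoc, inv_mul_cancel_left]

theorem exists_isQuasiconvex_of_fg {H : Subgroup (FreeGroup α)} (hH : H.FG) :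
    ∃ R, IsQuasiconvex H R := by
  obtain ⟨S, rfl, hS⟩ := Subgroup.fg_iff H |>.mp hH
  obtain ⟨R, hR⟩ := (hS.image norm).bddAbove
  exact ⟨R, isQuasiconvex_closure fun s hs ↦ hR ⟨s, hs, rfl⟩⟩

theorem exists_eq_conj_isCyclicallyReduced (x : FreeGroup α) :
    ∃ u c : FreeGroup α, IsCyclicallyReduced c.toWord ∧ x = u * c * u⁻¹ := by
  have hc := reduceCyclically.isCyclicallyReduced (isReduced_toWord (x := x))
  refine ⟨mk (reduceCyclically.conjugator x.toWord), mk (reduceCyclically x.toWord), ?_, ?_⟩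
  · rwa [toWord_mk, hc.isReduced.reduce_eq]
  · rw [inv_mk, mul_mk, mul_mk, reduceCyclically.conj_conjugator_reduceCyclically, mk_toWord]

theorem toWord_prefix_toWord_conj_pow {v c : FreeGroup α} (hc : IsCyclicallyReduced c.toWord)
    (hv : IsReduced (v.toWord ++ c.toWord ++ v⁻¹.toWord)) {n : ℕ} (hn : n ≠ 0) :
    v.toWord <+: (v * c ^ n * v⁻¹).toWord := by
  have hred := IsReduced.append_flatten_replicate_append hc hv hn
  have hmk : v * c ^ n * v⁻¹ = mk (v.toWord ++ (replicate n c.toWord).flatten ++ v⁻¹.toWord) := by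
    rw [← mul_mk, ← mul_mk, ← pow_mk, mk_toWord, mk_toWord, mk_toWord]
  rw [hmk, toWord_mk, hred.reduce_eq, append_assoc]
  exact prefix_append _ _

theorem toWord_mul_mk_singleton {w : FreeGroup α} {y : α × Bool}
    (hy : ∀ z ∈ w.toWord.getLast?, z.1 = y.1 → z.2 = y.2) :
    (w * mk [y]).toWord = w.toWord ++ [y] := by
  rw [← mk_toWord (x := w), mul_mk, toWord_mk, mk_toWord, IsReduced.reduce_eq]
  exact isReduced_append_iff.mpr ⟨isReduced_toWord, .singleton, fun z hz b hb ↦ by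
    simp only [head?_cons, Option.mem_some_iff] at hb; exact hb ▸ hy z hz⟩

theorem exists_norm_inv_mul_le_one_isReduced [Nontrivial α] (w : FreeGroup α) {c : FreeGroup α}
    (hc : c ≠ 1) : ∃ v, (w⁻¹ * v).norm ≤ 1 ∧ IsReduced (v.toWord ++ c.toWord ++ v⁻¹.toWord) := by
  have hc' : c.toWord ≠ [] := by simpa using hc
  set a := c.toWord.getLast hc'
  set b := c.toWord.head hc'
  set z := w.toWord.getLastD a
  -- `y` must not cancel the last letter `z` of `w` nor the first letter `b` of `c`, and `y⁻¹`
  -- must not cancel the last letter `a` of `c`; with two generators there are four letters.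
  obtain ⟨y, hy⟩ := exists_notMem_of_card_le_three
    (Finset.card_le_three : ({(z.1, !z.2), (b.1, !b.2), a} : Finset (α × Bool)).card ≤ 3)
  simp only [Finset.mem_insert, Finset.mem_singleton, not_or] at hy
  obtain ⟨hyz, hyb, hya⟩ := hy
  have hv : (w * mk [y]).toWord = w.toWord ++ [y] := toWord_mul_mk_singleton fun z' hz' ↦ by
    rw [show z' = z by simp [z, getLastD_eq_getLast?, Option.mem_def.mp hz']]
    exact fst_eq_imp_snd_eq_iff.mpr hyz
  refine ⟨w * mk [y], by rw [inv_mul_cancel_left]; exact norm_mk_le,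
    IsReduced.append_overlap ?_ ?_ hc'⟩
  · refine isReduced_append_iff.mpr ⟨isReduced_toWord, isReduced_toWord, fun y' hy' b' hb' ↦ ?_⟩
    rw [hv, getLast?_concat, Option.mem_some_iff] at hy'
    rw [head?_eq_some_head hc', Option.mem_some_iff] at hb'
    subst hy' hb'
    exact fun h ↦ (fst_eq_imp_snd_eq_iff.mpr hyb h.symm).symm
  · refine isReduced_append_iff.mpr ⟨isReduced_toWord, isReduced_toWord, fun a' ha' y' hy' ↦ ?_⟩
    rw [getLast?_eq_some_getLast hc', Option.mem_some_iff] at ha'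
    rw [toWord_inv, hv] at hy'
    simp only [invRev, map_append, map_cons, map_nil, reverse_append, reverse_cons, reverse_nil,
      nil_append, cons_append, head?_cons, Option.mem_def, Option.some.injEq] at hy'
    subst ha' hy'
    exact fst_eq_imp_snd_eq_iff.mpr fun h ↦
      hya (Prod.ext (Prod.ext_iff.mp h).1 (by simpa using (Prod.ext_iff.mp h).2))

theorem finite_setOf_norm_le [Finite α] (R : ℕ) : {x : FreeGroup α | x.norm ≤ R}.Finite :=
  ((List.finite_length_le _ R).image mk).subset fun x hx ↦ ⟨x.toWord, hx, mk_toWord⟩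

theorem finiteIndex_of_almostNormal [Finite α] [Nontrivial α] {H : Subgroup (FreeGroup α)}
    (hfg : H.FG) (hne : H ≠ ⊥) (han : AlmostNormal H) : H.FiniteIndex := by
  obtain ⟨R, hR⟩ := exists_isQuasiconvex_of_fg hfg
  obtain ⟨h, hh, h1⟩ := H.bot_or_exists_ne_one.resolve_left hne
  obtain ⟨u, c, hc, rfl⟩ := exists_eq_conj_isCyclicallyReduced h
  have hc1 : c ≠ 1 := by rintro rfl; simp at h1
  refine Subgroup.finiteIndex_of_mul_eq_univ (finite_setOf_norm_le (R + 1)) ?_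
  refine Set.eq_univ_of_forall fun w ↦ ?_
  obtain ⟨v, hwv, hv⟩ := exists_norm_inv_mul_le_one_isReduced w hc1
  obtain ⟨n, hn, hmem⟩ := han.exists_conj_pow_mem hh (v * u⁻¹)
  have hconj : (v * u⁻¹ * (u * c * u⁻¹) * (v * u⁻¹)⁻¹) ^ n = v * c ^ n * v⁻¹ := by
    rw [← conj_pow]; group
  obtain ⟨h', hh', hnorm⟩ := hR _ (hconj ▸ hmem) _ (toWord_prefix_toWord_conj_pow hc hv hn)
  rw [mk_toWord] at hnorm
  refine Set.mem_mul.mpr ⟨h', hh', h'⁻¹ * w, ?_, mul_inv_cancel_left _ _⟩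
  calc (h'⁻¹ * w).norm = (h'⁻¹ * v * (w⁻¹ * v)⁻¹).norm := by group
    _ ≤ (h'⁻¹ * v).norm + (w⁻¹ * v)⁻¹.norm := norm_mul_le _ _
    _ ≤ R + 1 := by rw [norm_inv_eq]; omega

end FreeGroup

/-- A finitely generated nontrivial almost normal subgroup of a finitely generated
free group has finite index. -/
theorem finiteIndex_of_almostNormal_freeGroup (k : ℕ)
    (H : Subgroup (FreeGroup (Fin k)))
    (hfg : Group.FG H) (hnontriv : H ≠ ⊥) (han : AlmostNormal H) :
    H.index ≠ 0 := by
  rcases lt_or_ge k 2 with hk | hk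
  · have : IsCyclic (FreeGroup (Fin k)) := by interval_cases k <;> infer_instance
    exact (IsCyclic.finiteIndex_of_ne_bot hnontriv).index_ne_zero
  · have : Nontrivial (Fin k) := Fin.nontrivial_iff_two_le.mpr hk
    exact (FreeGroup.finiteIndex_of_almostNormal ((Group.fg_iff_subgroup_fg H).mp hfg) hnontriv
      han).index_ne_zero
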